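/- Conversely, suppose for each i there is a symmetric left partial action ⇀_i of a Hopf algebra H on R_i, each iMj is a left R_i#H-module and right H^op#R_j-module with (1_i#h)·m = m·(h#1_j), (1_i#h)·r = h⇀_i r, (r_i#1)·m = r_i m, m·(1#r_j) = m r_j, and (1_i#h)·(mn) = ((1_i#h_(1))·m)((1_j#h_(2))·n). Then the map ▷ : H ⊗ R → R defined entrywise by h ▷ (m_ij) = ((1_i#h)·m_ij) is a symmetric left partial action of H on the generalized matrix algebra R leaving each ι_ij(iMj) invariant. -/

import Mathlib

open TensorProduct

section GMD

variable {k : Type*} [Field k] {n : ℕ}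
variable (M : Fin n → Fin n → Type*) [∀ i j, AddCommGroup (M i j)] [∀ i j, Module k (M i j)]
variable (θ : ∀ i j l : Fin n, M i j →ₗ[k] M j l →ₗ[k] M i l)
variable (e : ∀ i, M i i)

/-- A generalized matrix datum: the bilinear products `θ i j l` are associative and
the elements `e i = η_i(1)` are units. -/
structure IsGMDatum : Prop where
  assoc : ∀ (i j l m : Fin n) (x : M i j) (y : M j l) (z : M l m),
    θ i l m (θ i j l x y) z = θ i j m x (θ j l m y z)
  one_mul : ∀ (i j : Fin n) (x : M i j), θ i i j (e i) x = x
  mul_one : ∀ (i j : Fin n) (x : M i j), θ i j j x (e j) = x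

/-- The underlying space of the generalized matrix algebra `R = ⊕_{i,j} M i j`. -/
abbrev gmaSpace := ∀ p : Fin n × Fin n, M p.1 p.2

/-- Row-column multiplication on the generalized matrix algebra. -/
def gmaMul (x y : gmaSpace M) : gmaSpace M :=
  fun p => ∑ l, θ p.1 l p.2 (x (p.1, l)) (y (l, p.2))

/-- The unit `Σ_i ι_ii (e i)` of the generalized matrix algebra. -/
noncomputable def gmaOne : gmaSpace M :=
  ∑ i, Pi.single (M := fun p : Fin n × Fin n => M p.1 p.2) (i, i) (e i)

end GMD
/-- Sweedler-style sum `h ↦ Σ f(h₍₁₎) * g(h₍₂₎)` with respect to a bilinear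
multiplication `mul`. -/
noncomputable def sweedler {k H B : Type*} [CommRing k] [Ring H] [HopfAlgebra k H]
    [AddCommGroup B] [Module k B]
    (mul : B →ₗ[k] B →ₗ[k] B) (f g : H →ₗ[k] B) : H →ₗ[k] B :=
  TensorProduct.lift ((mul ∘ₗ f).compl₂ g) ∘ₗ Coalgebra.comul

/-- A symmetric left partial action of a Hopf algebra `H` on a (not necessarily
unital-typeclass) algebra `(A, mulA, oneA)`: (LPA1) `1_H·a = a`;
(LPA2) `h·(ab) = (h₍₁₎·a)(h₍₂₎·b)`;
(LPA3) `h·(g·a) = (h₍₁₎·1)(h₍₂₎g·a) = (h₍₁₎g·a)(h₍₂₎·1)`. -/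
structure IsLeftPartialActionOn (k : Type*) {H A : Type*} [CommRing k] [Ring H]
    [HopfAlgebra k H] [AddCommGroup A] [Module k A]
    (mulA : A →ₗ[k] A →ₗ[k] A) (oneA : A) (act : H →ₗ[k] A →ₗ[k] A) : Prop where
  lpa1 : ∀ a : A, act 1 a = a
  lpa2 : ∀ (h : H) (a b : A),
    act h (mulA a b) = sweedler mulA (act.flip a) (act.flip b) h
  lpa3 : ∀ (h g : H) (a : A),
    act h (act g a) =
      sweedler mulA (act.flip oneA) ((act.flip a) ∘ₗ LinearMap.mulRight k g) h
  lpa3' : ∀ (h g : H) (a : A),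
    act h (act g a) =
      sweedler mulA ((act.flip a) ∘ₗ LinearMap.mulRight k g) (act.flip oneA) h

section GMA

variable {k : Type*} [Field k] {n : ℕ}
variable (M : Fin n → Fin n → Type*) [∀ i j, AddCommGroup (M i j)] [∀ i j, Module k (M i j)]
variable (θ : ∀ i j l : Fin n, M i j →ₗ[k] M j l →ₗ[k] M i l)

/-- The multiplication of the generalized matrix algebra, as a bilinear map. -/
noncomputable def gmaMulL : gmaSpace M →ₗ[k] gmaSpace M →ₗ[k] gmaSpace M :=
  LinearMap.mk₂ k (gmaMul M θ)
    (fun x x' y => by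
      funext p; simp [gmaMul, map_add, LinearMap.add_apply, Finset.sum_add_distrib])
    (fun c x y => by
      funext p; simp [gmaMul, Finset.smul_sum])
    (fun x y y' => by
      funext p; simp [gmaMul, map_add, LinearMap.add_apply, Finset.sum_add_distrib])
    (fun c x y => by
      funext p; simp [gmaMul, Finset.smul_sum])

/-- The canonical inclusion `ι_ij : M i j → R` of a component into the generalized
matrix algebra. -/
noncomputable def gmaIncl (i j : Fin n) : M i j →ₗ[k] gmaSpace M :=
  LinearMap.single k (fun p : Fin n × Fin n => M p.1 p.2) (i, j)

variable {H : Type*} [Ring H] [HopfAlgebra k H]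

/-- The restriction `π_ij(h)(m) = ι_ij⁻¹(h ▷ ι_ij(m))` of a partial action on the
generalized matrix algebra to the component `M i j`. -/
noncomputable def actRestrict (act : H →ₗ[k] gmaSpace M →ₗ[k] gmaSpace M)
    (i j : Fin n) : H →ₗ[k] M i j →ₗ[k] M i j where
  toFun h := (LinearMap.proj (i, j)) ∘ₗ (act h) ∘ₗ (gmaIncl M i j)
  map_add' h h' := by ext m; simp
  map_smul' c h := by ext m; simp

end GMA
section SmashGeneric

variable {k H A : Type*} [CommRing k] [Ring H] [HopfAlgebra k H]
  [AddCommGroup A] [Module k A]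

/-- The left partial smash product multiplication on `A ⊗ H` for a (bilinear)
multiplication `mulA` on `A` and an action-type map `act`:
`(a⊗h)(b⊗g) = Σ a(h₍₁₎·b) ⊗ h₍₂₎g`. -/
noncomputable def lsmashMul (mulA : A →ₗ[k] A →ₗ[k] A) (act : H →ₗ[k] A →ₗ[k] A) :
    (A ⊗[k] H) ⊗[k] (A ⊗[k] H) →ₗ[k] A ⊗[k] H :=
  (TensorProduct.map
      (TensorProduct.lift (TensorProduct.lift
        (((LinearMap.llcomp k A A A) ∘ₗ mulA).compl₂ act)))
      (TensorProduct.lift (LinearMap.mul k H))) ∘ₗ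
  (TensorProduct.tensorTensorTensorComm k (A ⊗[k] H) H A H).toLinearMap ∘ₗ
  (LinearMap.rTensor (A ⊗[k] H)
      ((TensorProduct.assoc k A H H).symm.toLinearMap ∘ₗ
        (LinearMap.lTensor A (Coalgebra.comul (R := k)))))

/-- Curried form of the left partial smash multiplication. -/
noncomputable def lsmashMul₂ (mulA : A →ₗ[k] A →ₗ[k] A) (act : H →ₗ[k] A →ₗ[k] A) :
    (A ⊗[k] H) →ₗ[k] (A ⊗[k] H) →ₗ[k] A ⊗[k] H :=
  TensorProduct.curry (lsmashMul mulA act)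

/-- The right partial smash product multiplication on `H ⊗ A` for a (bilinear)
multiplication `mH` on `H` (e.g. the opposite one), a multiplication `mulA` on `A`,
and a right action-type map `ract`:  `(g⊗b)(h⊗a) = Σ mH g h₍₁₎ ⊗ (b·h₍₂₎)a`. -/
noncomputable def rsmashMulGen (mH : H →ₗ[k] H →ₗ[k] H) (mulA : A →ₗ[k] A →ₗ[k] A)
    (ract : A →ₗ[k] H →ₗ[k] A) :
    (H ⊗[k] A) ⊗[k] (H ⊗[k] A) →ₗ[k] H ⊗[k] A :=
  (TensorProduct.map (TensorProduct.lift mH)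
      ((TensorProduct.lift (TensorProduct.lift
          ((LinearMap.llcomp k H A (A →ₗ[k] A) mulA) ∘ₗ ract))) ∘ₗ
        (TensorProduct.assoc k A H A).symm.toLinearMap)) ∘ₗ
  (TensorProduct.tensorTensorTensorComm k H A H (H ⊗[k] A)).toLinearMap ∘ₗ
  (LinearMap.lTensor (H ⊗[k] A)
      ((TensorProduct.assoc k H H A).toLinearMap ∘ₗ
        (LinearMap.rTensor A (Coalgebra.comul (R := k)))))

/-- Curried form of the right partial smash multiplication. -/
noncomputable def rsmashMulGen₂ (mH : H →ₗ[k] H →ₗ[k] H) (mulA : A →ₗ[k] A →ₗ[k] A)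
    (ract : A →ₗ[k] H →ₗ[k] A) :
    (H ⊗[k] A) →ₗ[k] (H ⊗[k] A) →ₗ[k] H ⊗[k] A :=
  TensorProduct.curry (rsmashMulGen mH mulA ract)

end SmashGeneric

/-! The action `▷` is computed entrywise by the maps `h ↦ (1_i#h)·`, so (LPA1), (LPA2) and the
invariance of each `ι_ij(M_ij)` come straight from unitality of the module structures and from
`(1_i#h)·(mn) = ((1_i#h₁)·m)((1_j#h₂)·n)`. Since the unit of `R` is diagonal, (LPA3) reduces to
`(1_i#h)·((1_i#g)·m) = Σ (h₁⇀1)((1_i#h₂g)·m) = Σ ((1_i#h₁g)·m)(h₂⇀1)`. The first equality holds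
because `(1#h)(1#g) = Σ (h₁⇀1 # 1)(1 # h₂g)` in `R_i#H`: both sides equal `Σ h₁⇀(g₁⇀1) # h₂g₂`,
the left one by (LPA2) and the right one by coassociativity and (LPA3). The second is the mirror
computation in `H^op#R_j`, brought back to the left via `(1_i#h)·m = m·(h#1_j)`. -/

open Coalgebra

theorem lift_compl₂_comul_eq_sum {k C B D E ι : Type*} [CommSemiring k] [AddCommMonoid C]
    [Module k C] [CoalgebraStruct k C] [AddCommMonoid B] [Module k B] [AddCommMonoid D]
    [Module k D] [AddCommMonoid E] [Module k E]
    (β : B →ₗ[k] D →ₗ[k] E) (f : C →ₗ[k] B) (g : C →ₗ[k] D) {x : C} (w : Repr k x ι) :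
    TensorProduct.lift ((β ∘ₗ f).compl₂ g) (comul x) =
      ∑ i ∈ w.index, β (f (w.left i)) (g (w.right i)) := by
  rw [← w.eq, map_sum]
  simp

section SmashProduct

variable {k H A : Type*} [CommRing k] [Ring H] [HopfAlgebra k H] [AddCommGroup A] [Module k A]

theorem sweedler_eq_sum {B ι : Type*} [AddCommGroup B] [Module k B]
    (mul : B →ₗ[k] B →ₗ[k] B) (f g : H →ₗ[k] B) {x : H} (w : Repr k x ι) :
    sweedler mul f g x = ∑ i ∈ w.index, mul (f (w.left i)) (g (w.right i)) :=
  lift_compl₂_comul_eq_sum mul f g w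

theorem sum_sum_mul_tmul_eq_map_sweedler {B Y ι κ : Type*} [AddCommGroup B] [Module k B]
    [AddCommGroup Y] [Module k Y] (mul : B →ₗ[k] B →ₗ[k] B) (f g : H →ₗ[k] B)
    (G : H →ₗ[k] Y) {h : H} (w : Repr k h ι) (w₂ : ∀ i, Repr k (w.right i) κ) :
    ∑ i ∈ w.index, ∑ m ∈ (w₂ i).index,
        mul (f (w.left i)) (g ((w₂ i).left m)) ⊗ₜ[k] G ((w₂ i).right m) =
      TensorProduct.map (sweedler mul f g) G (comul h) := by
  have hcoassoc := congrArg
    (TensorProduct.map (TensorProduct.lift ((mul ∘ₗ f).compl₂ g)) G ∘ₗ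
      (TensorProduct.assoc k H H H).symm.toLinearMap)
    (sum_tmul_tmul_eq w (fun i => ℛ k (w.left i)) w₂)
  simp only [map_sum, LinearMap.comp_apply, LinearEquiv.coe_coe,
    TensorProduct.assoc_symm_tmul, TensorProduct.map_tmul, TensorProduct.lift.tmul,
    LinearMap.compl₂_apply] at hcoassoc
  rw [← hcoassoc, ← w.eq, map_sum]
  refine Finset.sum_congr rfl fun i _ => ?_
  rw [← TensorProduct.sum_tmul, TensorProduct.map_tmul, sweedler_eq_sum _ _ _ (ℛ k (w.left i))]

theorem sum_sum_tmul_mul_eq_map_sweedler {B Y ι κ : Type*} [AddCommGroup B] [Module k B]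
    [AddCommGroup Y] [Module k Y] (mul : B →ₗ[k] B →ₗ[k] B) (f g : H →ₗ[k] B)
    (G : H →ₗ[k] Y) {h : H} (w : Repr k h ι) (w₁ : ∀ i, Repr k (w.left i) κ) :
    ∑ i ∈ w.index, ∑ m ∈ (w₁ i).index,
        G ((w₁ i).left m) ⊗ₜ[k] mul (f ((w₁ i).right m)) (g (w.right i)) =
      TensorProduct.map G (sweedler mul f g) (comul h) := by
  have hcoassoc := congrArg
    (TensorProduct.map G (TensorProduct.lift ((mul ∘ₗ f).compl₂ g)))
    (sum_tmul_tmul_eq w w₁ (fun i => ℛ k (w.right i)))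
  simp only [map_sum, TensorProduct.map_tmul, TensorProduct.lift.tmul,
    LinearMap.compl₂_apply, LinearMap.comp_apply] at hcoassoc
  rw [hcoassoc, ← w.eq, map_sum]
  refine Finset.sum_congr rfl fun i _ => ?_
  rw [← TensorProduct.tmul_sum, TensorProduct.map_tmul, sweedler_eq_sum _ _ _ (ℛ k (w.right i))]

theorem lsmashMul₂_tmul (mulA : A →ₗ[k] A →ₗ[k] A) (act : H →ₗ[k] A →ₗ[k] A)
    (a b : A) (x y : H) :
    lsmashMul₂ mulA act (a ⊗ₜ x) (b ⊗ₜ y) =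
      TensorProduct.map ((mulA a) ∘ₗ act.flip b) (LinearMap.mulRight k y) (comul x) := by
  rw [lsmashMul₂, lsmashMul]
  simp only [TensorProduct.curry_apply, LinearMap.comp_apply,
    LinearMap.rTensor_tmul, LinearMap.lTensor_tmul]
  induction comul (R := k) x using TensorProduct.induction_on with
  | zero => simp
  | tmul p q =>
      simp [TensorProduct.tensorTensorTensorComm_tmul, TensorProduct.assoc_symm_tmul,
        TensorProduct.map_tmul, TensorProduct.lift.tmul]
  | add s t hs ht =>
      simp only [TensorProduct.tmul_add, TensorProduct.add_tmul, map_add, hs, ht]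

theorem rsmashMulGen₂_tmul (mH : H →ₗ[k] H →ₗ[k] H) (mulA : A →ₗ[k] A →ₗ[k] A)
    (ract : A →ₗ[k] H →ₗ[k] A) (x y : H) (b a : A) :
    rsmashMulGen₂ mH mulA ract (x ⊗ₜ b) (y ⊗ₜ a) =
      TensorProduct.map (mH x) (mulA.flip a ∘ₗ ract b) (comul y) := by
  rw [rsmashMulGen₂, rsmashMulGen]
  simp only [TensorProduct.curry_apply, LinearMap.comp_apply,
    LinearMap.rTensor_tmul, LinearMap.lTensor_tmul]
  induction comul (R := k) y using TensorProduct.induction_on with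
  | zero => simp
  | tmul p q =>
      simp [TensorProduct.tensorTensorTensorComm_tmul, TensorProduct.assoc_tmul,
        TensorProduct.assoc_symm_tmul, TensorProduct.map_tmul, TensorProduct.lift.tmul]
  | add s t hs ht =>
      simp only [TensorProduct.tmul_add, TensorProduct.add_tmul, map_add, hs, ht]

end SmashProduct

namespace IsLeftPartialActionOn

variable {k H A : Type*} [CommRing k] [Ring H] [HopfAlgebra k H] [AddCommGroup A] [Module k A]
  {mulA : A →ₗ[k] A →ₗ[k] A} {oneA : A} {act : H →ₗ[k] A →ₗ[k] A}

theorem sweedler_one_left (hpa : IsLeftPartialActionOn k mulA oneA act)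
    (hone_mul : ∀ a, mulA oneA a = a) (b : A) :
    sweedler mulA (act.flip oneA) (act.flip b) = act.flip b :=
  LinearMap.ext fun h => by rw [← hpa.lpa2, hone_mul, LinearMap.flip_apply]

theorem sweedler_one_right (hpa : IsLeftPartialActionOn k mulA oneA act)
    (hmul_one : ∀ a, mulA a oneA = a) (b : A) :
    sweedler mulA (act.flip b) (act.flip oneA) = act.flip b :=
  LinearMap.ext fun h => by rw [← hpa.lpa2, hmul_one, LinearMap.flip_apply]

theorem sweedler_one_mulRight (hpa : IsLeftPartialActionOn k mulA oneA act) (g : H) (a : A) :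
    sweedler mulA (act.flip oneA) (act.flip a ∘ₗ LinearMap.mulRight k g) = act.flip (act g a) :=
  LinearMap.ext fun h => (hpa.lpa3 h g a).symm

theorem sweedler_mulRight_one (hpa : IsLeftPartialActionOn k mulA oneA act) (g : H) (a : A) :
    sweedler mulA (act.flip a ∘ₗ LinearMap.mulRight k g) (act.flip oneA) = act.flip (act g a) :=
  LinearMap.ext fun h => (hpa.lpa3' h g a).symm

end IsLeftPartialActionOn

section LeftSmash

variable {k H A : Type*} [CommRing k] [Ring H] [HopfAlgebra k H] [AddCommGroup A] [Module k A]
  {mulA : A →ₗ[k] A →ₗ[k] A} {oneA : A} {act : H →ₗ[k] A →ₗ[k] A}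

local infixl:70 " ⋆ " => lsmashMul₂ mulA act

local notation "𝟙#" x:max => oneA ⊗ₜ x ⋆ oneA ⊗ₜ (1 : H)

theorem lsmashMul₂_tmul_one_left (hpa : IsLeftPartialActionOn k mulA oneA act)
    (r : A) (z : A ⊗[k] H) :
    r ⊗ₜ (1 : H) ⋆ z = TensorProduct.map (mulA r) LinearMap.id z := by
  induction z using TensorProduct.induction_on with
  | zero => simp
  | tmul b y =>
      rw [lsmashMul₂_tmul, Bialgebra.comul_one, Algebra.TensorProduct.one_def]
      simp [hpa.lpa1]
  | add s t hs ht => rw [map_add, map_add, hs, ht]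

theorem lsmashUnit_eq (hone_mul : ∀ a, mulA oneA a = a) (x : H) :
    𝟙# x = TensorProduct.map (act.flip oneA) LinearMap.id (comul x) := by
  rw [lsmashMul₂_tmul]
  congr 1
  ext p q
  simp [hone_mul]

theorem lsmashMul₂_tmul_one_one (hpa : IsLeftPartialActionOn k mulA oneA act)
    (hmul_one : ∀ a, mulA a oneA = a) (r : A) :
    r ⊗ₜ (1 : H) ⋆ oneA ⊗ₜ (1 : H) = r ⊗ₜ (1 : H) := by
  simp [lsmashMul₂_tmul_one_left hpa, hmul_one]

theorem lsmashUnit_mul_tmul (hpa : IsLeftPartialActionOn k mulA oneA act)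
    (hone_mul : ∀ a, mulA oneA a = a) (x y : H) (b : A) :
    𝟙# x ⋆ b ⊗ₜ y = TensorProduct.map (act.flip b) (LinearMap.mulRight k y) (comul x) := by
  conv_rhs => rw [← hpa.sweedler_one_left hone_mul b,
    ← sum_sum_mul_tmul_eq_map_sweedler _ _ _ _ (ℛ k x) (fun i => ℛ k _)]
  rw [lsmashUnit_eq hone_mul, ← (ℛ k x).eq, map_sum, map_sum, LinearMap.sum_apply]
  refine Finset.sum_congr rfl fun i _ => ?_
  rw [TensorProduct.map_tmul, lsmashMul₂_tmul, ← (ℛ k _).eq, map_sum]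
  simp

theorem lsmashUnit_mul_lsmashUnit (hpa : IsLeftPartialActionOn k mulA oneA act)
    (hone_mul : ∀ a, mulA oneA a = a) (h g : H) {ι : Type*} (w : Repr k h ι) :
    𝟙# h ⋆ 𝟙# g = ∑ i ∈ w.index, act (w.left i) oneA ⊗ₜ (1 : H) ⋆ 𝟙# (w.right i * g) := by
  let wg := ℛ k g
  calc 𝟙# h ⋆ 𝟙# g
      = ∑ j ∈ wg.index, TensorProduct.map (act.flip (act (wg.left j) oneA))
          (LinearMap.mulRight k (wg.right j)) (comul h) := by
        rw [lsmashUnit_eq hone_mul g, ← wg.eq, map_sum, map_sum]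
        simp only [TensorProduct.map_tmul, lsmashUnit_mul_tmul hpa hone_mul]
        rfl
    _ = ∑ j ∈ wg.index, ∑ i ∈ w.index, ∑ m ∈ (ℛ k (w.right i)).index,
          mulA (act (w.left i) oneA) (act ((ℛ k (w.right i)).left m * wg.left j) oneA) ⊗ₜ
            ((ℛ k (w.right i)).right m * wg.right j) := by
        refine Finset.sum_congr rfl fun j _ => ?_
        rw [← hpa.sweedler_one_mulRight,
          ← sum_sum_mul_tmul_eq_map_sweedler _ _ _ _ w (fun i => ℛ k _)]
        rfl
    _ = _ := by
        rw [Finset.sum_comm]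
        refine Finset.sum_congr rfl fun i _ => ?_
        rw [lsmashMul₂_tmul_one_left hpa, lsmashUnit_eq hone_mul, Bialgebra.comul_mul,
          ← (ℛ k (w.right i)).eq, ← wg.eq, Finset.sum_mul_sum]
        simp only [Algebra.TensorProduct.tmul_mul_tmul, map_sum, TensorProduct.map_tmul,
          LinearMap.id_coe, id_eq, LinearMap.flip_apply]
        exact Finset.sum_comm

variable (mulA oneA act) in
def leftPartialSmash : Submodule k (A ⊗[k] H) :=
  Submodule.span k {z | ∃ (a : A) (h : H), z = a ⊗ₜ h ⋆ oneA ⊗ₜ (1 : H)}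

theorem lsmash_rep_unit_apply_unit_apply (hpa : IsLeftPartialActionOn k mulA oneA act)
    (hone_mul : ∀ a, mulA oneA a = a) (hmul_one : ∀ a, mulA a oneA = a)
    {N : Type*} [AddCommGroup N] [Module k N]
    (ρ : A →ₗ[k] N →ₗ[k] N) (Λ : (A ⊗[k] H) →ₗ[k] Module.End k N)
    (hmul : ∀ x ∈ leftPartialSmash mulA oneA act, ∀ y ∈ leftPartialSmash mulA oneA act,
      Λ (x ⋆ y) = Λ x * Λ y)
    (hρ : ∀ (r : A) (m : N), Λ (r ⊗ₜ (1 : H) ⋆ oneA ⊗ₜ (1 : H)) m = ρ r m)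
    (h g : H) (m : N) {ι : Type*} (w : Repr k h ι) :
    Λ (𝟙# h) (Λ (𝟙# g) m) =
      ∑ i ∈ w.index, ρ (act (w.left i) oneA) (Λ (𝟙# (w.right i * g)) m) := by
  have unit_mem (x : H) : 𝟙# x ∈ leftPartialSmash mulA oneA act :=
    Submodule.subset_span ⟨oneA, x, rfl⟩
  have scalar_mem (r : A) : r ⊗ₜ (1 : H) ∈ leftPartialSmash mulA oneA act :=
    Submodule.subset_span ⟨r, 1, (lsmashMul₂_tmul_one_one hpa hmul_one r).symm⟩
  rw [← Module.End.mul_apply, ← hmul _ (unit_mem h) _ (unit_mem g),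
    lsmashUnit_mul_lsmashUnit hpa hone_mul h g w, map_sum, LinearMap.sum_apply]
  refine Finset.sum_congr rfl fun i _ => ?_
  rw [hmul _ (scalar_mem _) _ (unit_mem _), Module.End.mul_apply, ← hρ,
    lsmashMul₂_tmul_one_one hpa hmul_one]

end LeftSmash

section RightSmash

variable {k H A : Type*} [CommRing k] [Ring H] [HopfAlgebra k H] [AddCommGroup A] [Module k A]
  {mulA : A →ₗ[k] A →ₗ[k] A} {oneA : A} {act : H →ₗ[k] A →ₗ[k] A}

local infixl:70 " ⋆ " => rsmashMulGen₂ (LinearMap.flip (LinearMap.mul k H)) mulA (LinearMap.flip act)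

local notation x:max "#𝟙" => (1 : H) ⊗ₜ oneA ⋆ x ⊗ₜ oneA

theorem rsmashMulGen₂_tmul_one_right (hpa : IsLeftPartialActionOn k mulA oneA act)
    (z : H ⊗[k] A) (a : A) :
    z ⋆ (1 : H) ⊗ₜ a = TensorProduct.map LinearMap.id (mulA.flip a) z := by
  induction z using TensorProduct.induction_on with
  | zero => simp
  | tmul x b =>
      rw [rsmashMulGen₂_tmul, Bialgebra.comul_one, Algebra.TensorProduct.one_def]
      simp [hpa.lpa1]
  | add s t hs ht => rw [map_add, LinearMap.add_apply, map_add, hs, ht]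

theorem rsmashUnit_eq (hmul_one : ∀ a, mulA a oneA = a) (x : H) :
    x #𝟙 = TensorProduct.map LinearMap.id (act.flip oneA) (comul x) := by
  rw [rsmashMulGen₂_tmul]
  congr 1
  ext p q
  simp [hmul_one]

theorem rsmashMulGen₂_one_one_tmul (hpa : IsLeftPartialActionOn k mulA oneA act)
    (hone_mul : ∀ a, mulA oneA a = a) (a : A) :
    (1 : H) ⊗ₜ oneA ⋆ (1 : H) ⊗ₜ a = (1 : H) ⊗ₜ a := by
  simp [rsmashMulGen₂_tmul_one_right hpa, hone_mul]

theorem tmul_mul_rsmashUnit (hpa : IsLeftPartialActionOn k mulA oneA act)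
    (hmul_one : ∀ a, mulA a oneA = a) (x y : H) (b : A) :
    y ⊗ₜ b ⋆ x #𝟙 = TensorProduct.map (LinearMap.mulRight k y) (act.flip b) (comul x) := by
  conv_rhs => rw [← hpa.sweedler_one_right hmul_one b,
    ← sum_sum_tmul_mul_eq_map_sweedler _ _ _ _ (ℛ k x) (fun i => ℛ k _)]
  rw [rsmashUnit_eq hmul_one, ← (ℛ k x).eq, map_sum, map_sum]
  refine Finset.sum_congr rfl fun i _ => ?_
  rw [TensorProduct.map_tmul, rsmashMulGen₂_tmul, ← (ℛ k _).eq, map_sum]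
  simp

theorem rsmashUnit_mul_rsmashUnit (hpa : IsLeftPartialActionOn k mulA oneA act)
    (hmul_one : ∀ a, mulA a oneA = a) (h g : H) {ι : Type*} (w : Repr k h ι) :
    g #𝟙 ⋆ h #𝟙 = ∑ i ∈ w.index, (w.left i * g) #𝟙 ⋆ (1 : H) ⊗ₜ act (w.right i) oneA := by
  let wg := ℛ k g
  calc g #𝟙 ⋆ h #𝟙
      = ∑ j ∈ wg.index, TensorProduct.map (LinearMap.mulRight k (wg.left j))
          (act.flip (act (wg.right j) oneA)) (comul h) := by
        rw [rsmashUnit_eq hmul_one g, ← wg.eq, map_sum, map_sum, LinearMap.sum_apply]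
        simp only [TensorProduct.map_tmul, tmul_mul_rsmashUnit hpa hmul_one]
        rfl
    _ = ∑ j ∈ wg.index, ∑ i ∈ w.index, ∑ m ∈ (ℛ k (w.left i)).index,
          ((ℛ k (w.left i)).left m * wg.left j) ⊗ₜ
            mulA (act ((ℛ k (w.left i)).right m * wg.right j) oneA) (act (w.right i) oneA) := by
        refine Finset.sum_congr rfl fun j _ => ?_
        rw [← hpa.sweedler_mulRight_one,
          ← sum_sum_tmul_mul_eq_map_sweedler _ _ _ _ w (fun i => ℛ k _)]
        rfl
    _ = _ := by
        rw [Finset.sum_comm]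
        refine Finset.sum_congr rfl fun i _ => ?_
        rw [rsmashMulGen₂_tmul_one_right hpa, rsmashUnit_eq hmul_one, Bialgebra.comul_mul,
          ← (ℛ k (w.left i)).eq, ← wg.eq, Finset.sum_mul_sum]
        simp only [Algebra.TensorProduct.tmul_mul_tmul, map_sum, TensorProduct.map_tmul,
          LinearMap.id_coe, id_eq, LinearMap.flip_apply]
        exact Finset.sum_comm

variable (mulA oneA act) in
def rightPartialSmash : Submodule k (H ⊗[k] A) :=
  Submodule.span k {z | ∃ (h : H) (a : A), z = (1 : H) ⊗ₜ oneA ⋆ h ⊗ₜ a}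

theorem rsmash_rep_unit_apply_unit_apply (hpa : IsLeftPartialActionOn k mulA oneA act)
    (hone_mul : ∀ a, mulA oneA a = a) (hmul_one : ∀ a, mulA a oneA = a)
    {N : Type*} [AddCommGroup N] [Module k N]
    (ρ : N →ₗ[k] A →ₗ[k] N) (Λ : (H ⊗[k] A) →ₗ[k] Module.End k N)
    (hmul : ∀ x ∈ rightPartialSmash mulA oneA act, ∀ y ∈ rightPartialSmash mulA oneA act,
      Λ (x ⋆ y) = Λ y * Λ x)
    (hρ : ∀ (a : A) (m : N), Λ ((1 : H) ⊗ₜ oneA ⋆ (1 : H) ⊗ₜ a) m = ρ m a)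
    (h g : H) (m : N) {ι : Type*} (w : Repr k h ι) :
    Λ (h #𝟙) (Λ (g #𝟙) m) =
      ∑ i ∈ w.index, ρ (Λ ((w.left i * g) #𝟙) m) (act (w.right i) oneA) := by
  have unit_mem (x : H) : x #𝟙 ∈ rightPartialSmash mulA oneA act :=
    Submodule.subset_span ⟨x, oneA, rfl⟩
  have scalar_mem (a : A) : (1 : H) ⊗ₜ a ∈ rightPartialSmash mulA oneA act :=
    Submodule.subset_span ⟨1, a, (rsmashMulGen₂_one_one_tmul hpa hone_mul a).symm⟩
  rw [← Module.End.mul_apply, ← hmul _ (unit_mem g) _ (unit_mem h),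
    rsmashUnit_mul_rsmashUnit hpa hmul_one h g w, map_sum, LinearMap.sum_apply]
  refine Finset.sum_congr rfl fun i _ => ?_
  rw [hmul _ (unit_mem _) _ (scalar_mem _), Module.End.mul_apply, ← hρ,
    rsmashMulGen₂_one_one_tmul hpa hone_mul]

end RightSmash

section Entrywise

variable {k : Type*} [Field k] {n : ℕ} {M : Fin n → Fin n → Type*}
  [∀ i j, AddCommGroup (M i j)] [∀ i j, Module k (M i j)]
  {θ : ∀ i j l : Fin n, M i j →ₗ[k] M j l →ₗ[k] M i l} {e : ∀ i, M i i}

theorem gmaMulL_apply (x y : gmaSpace M) (p : Fin n × Fin n) :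
    gmaMulL M θ x y p = ∑ l, θ p.1 l p.2 (x (p.1, l)) (y (l, p.2)) := rfl

theorem gmaOne_apply_self (i : Fin n) : gmaOne M e (i, i) = e i := by
  rw [gmaOne, Finset.sum_apply, Finset.sum_eq_single_of_mem i (Finset.mem_univ i)]
  · exact Pi.single_eq_same _ _
  · intro j _ hji
    exact Pi.single_eq_of_ne (by simp [hji.symm]) _

theorem gmaOne_apply_of_ne {i j : Fin n} (hij : i ≠ j) : gmaOne M e (i, j) = 0 := by
  rw [gmaOne, Finset.sum_apply]
  exact Finset.sum_eq_zero fun l _ => Pi.single_eq_of_ne (by grind) _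

theorem gmaMulL_apply_of_left_eq_zero {x : gmaSpace M} (y : gmaSpace M) {p : Fin n × Fin n}
    (hx : ∀ l ≠ p.1, x (p.1, l) = 0) :
    gmaMulL M θ x y p = θ p.1 p.1 p.2 (x (p.1, p.1)) (y p) :=
  Finset.sum_eq_single_of_mem p.1 (Finset.mem_univ _) fun l _ hl => by simp [hx l hl]

theorem gmaMulL_apply_of_right_eq_zero (x : gmaSpace M) {y : gmaSpace M} {p : Fin n × Fin n}
    (hy : ∀ l ≠ p.2, y (l, p.2) = 0) :
    gmaMulL M θ x y p = θ p.1 p.2 p.2 (x p) (y (p.2, p.2)) :=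
  Finset.sum_eq_single_of_mem p.2 (Finset.mem_univ _) fun l _ hl => by simp [hy l hl]

variable {H : Type*} [Ring H] [HopfAlgebra k H] {L : ∀ i j, H →ₗ[k] Module.End k (M i j)}
  {T : H →ₗ[k] gmaSpace M →ₗ[k] gmaSpace M}

theorem isLeftPartialActionOn_gma_of_entrywise
    (hT : ∀ h x p, T h x p = L p.1 p.2 h (x p))
    (hone : ∀ i j, L i j 1 = 1)
    (hmul : ∀ (i j l : Fin n) (h : H) (m : M i j) (m' : M j l),
      L i l h (θ i j l m m') =
        TensorProduct.lift ((θ i j l ∘ₗ (L i j).flip m).compl₂ ((L j l).flip m')) (comul h))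
    (hleft : ∀ (i j : Fin n) (h g : H) (m : M i j),
      L i j h (L i j g m) =
        TensorProduct.lift ((θ i i j ∘ₗ (L i i).flip (e i)).compl₂
          ((L i j).flip m ∘ₗ LinearMap.mulRight k g)) (comul h))
    (hright : ∀ (i j : Fin n) (h g : H) (m : M i j),
      L i j h (L i j g m) =
        TensorProduct.lift ((θ i j j ∘ₗ ((L i j).flip m ∘ₗ LinearMap.mulRight k g)).compl₂
          ((L j j).flip (e j))) (comul h)) :
    IsLeftPartialActionOn k (gmaMulL M θ) (gmaOne M e) T where
  lpa1 x := funext fun p => by rw [hT, hone, Module.End.one_apply]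
  lpa2 h x y := funext fun p => by
    rw [sweedler_eq_sum _ _ _ (ℛ k h), Finset.sum_apply, hT]
    simp only [gmaMulL_apply, map_sum, hmul, lift_compl₂_comul_eq_sum _ _ _ (ℛ k h)]
    rw [Finset.sum_comm]
    simp [hT]
  lpa3 h g x := funext fun p => by
    rw [sweedler_eq_sum _ _ _ (ℛ k h), Finset.sum_apply, hT, hT, hleft,
      lift_compl₂_comul_eq_sum _ _ _ (ℛ k h)]
    refine Finset.sum_congr rfl fun t _ => ?_
    rw [gmaMulL_apply_of_left_eq_zero _ fun l hl => by
      rw [LinearMap.flip_apply, hT, gmaOne_apply_of_ne hl.symm, map_zero]]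
    simp [hT, gmaOne_apply_self]
  lpa3' h g x := funext fun p => by
    rw [sweedler_eq_sum _ _ _ (ℛ k h), Finset.sum_apply, hT, hT, hright,
      lift_compl₂_comul_eq_sum _ _ _ (ℛ k h)]
    refine Finset.sum_congr rfl fun t _ => ?_
    rw [gmaMulL_apply_of_right_eq_zero _ fun l hl => by
      rw [LinearMap.flip_apply, hT, gmaOne_apply_of_ne hl, map_zero]]
    simp [hT, gmaOne_apply_self]

theorem apply_gmaIncl_of_entrywise (hT : ∀ h x p, T h x p = L p.1 p.2 h (x p))
    (i j : Fin n) (h : H) (m : M i j) :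
    T h (gmaIncl (k := k) M i j m) = gmaIncl (k := k) M i j (L i j h m) := by
  funext p
  rw [hT]
  by_cases hp : p = (i, j)
  · subst hp
    simp [gmaIncl]
  · simp [gmaIncl, Pi.single_eq_of_ne hp]

end Entrywise

theorem gma_partial_action_of_local_data_general
    {k : Type*} [Field k] {n : ℕ}
    (M : Fin n → Fin n → Type*) [∀ i j, AddCommGroup (M i j)] [∀ i j, Module k (M i j)]
    (θ : ∀ i j l : Fin n, M i j →ₗ[k] M j l →ₗ[k] M i l)
    (e : ∀ i, M i i) (hd : IsGMDatum M θ e)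
    {H : Type*} [Ring H] [HopfAlgebra k H]
    (acti : ∀ i, H →ₗ[k] M i i →ₗ[k] M i i)
    (hacti : ∀ i, IsLeftPartialActionOn k (θ i i i) (e i) (acti i))
    (Lmod : ∀ i j, (M i i ⊗[k] H) →ₗ[k] Module.End k (M i j))
    (Rmod : ∀ i j, (H ⊗[k] M j j) →ₗ[k] Module.End k (M i j))
    -- `M i j` is a left module over the left partial smash product `R_i # H`
    (hLmul : ∀ i j : Fin n,
      ∀ x ∈ Submodule.span k {z : M i i ⊗[k] H | ∃ (a : M i i) (h : H),
          z = lsmashMul₂ (θ i i i) (acti i) (a ⊗ₜ h) ((e i) ⊗ₜ (1 : H))},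
      ∀ y ∈ Submodule.span k {z : M i i ⊗[k] H | ∃ (a : M i i) (h : H),
          z = lsmashMul₂ (θ i i i) (acti i) (a ⊗ₜ h) ((e i) ⊗ₜ (1 : H))},
        Lmod i j (lsmashMul₂ (θ i i i) (acti i) x y) = Lmod i j x * Lmod i j y)
    (hLone : ∀ i j : Fin n,
      Lmod i j (lsmashMul₂ (θ i i i) (acti i)
        ((e i) ⊗ₜ (1 : H)) ((e i) ⊗ₜ (1 : H))) = 1)
    -- `M i j` is a right module over the right partial smash product `H^op # R_j`
    (hRmul : ∀ i j : Fin n,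
      ∀ x ∈ Submodule.span k {z : H ⊗[k] M j j | ∃ (h : H) (a : M j j),
          z = rsmashMulGen₂ (LinearMap.mul k H).flip (θ j j j) ((acti j).flip)
                ((1 : H) ⊗ₜ (e j)) (h ⊗ₜ a)},
      ∀ y ∈ Submodule.span k {z : H ⊗[k] M j j | ∃ (h : H) (a : M j j),
          z = rsmashMulGen₂ (LinearMap.mul k H).flip (θ j j j) ((acti j).flip)
                ((1 : H) ⊗ₜ (e j)) (h ⊗ₜ a)},
        Rmod i j (rsmashMulGen₂ (LinearMap.mul k H).flip (θ j j j) ((acti j).flip) x y) =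
          Rmod i j y * Rmod i j x) :
    -- `u i h = 1_i # h` in `R_i # H`,  `v j h = h # 1_j` in `H^op # R_j`
    ∀ u : ∀ i : Fin n, H →ₗ[k] (M i i ⊗[k] H),
      (∀ (i : Fin n) (h : H), u i h =
        lsmashMul₂ (θ i i i) (acti i) ((e i) ⊗ₜ h) ((e i) ⊗ₜ (1 : H))) →
    ∀ v : ∀ j : Fin n, H →ₗ[k] (H ⊗[k] M j j),
      (∀ (j : Fin n) (h : H), v j h =
        rsmashMulGen₂ (LinearMap.mul k H).flip (θ j j j) ((acti j).flip)
          ((1 : H) ⊗ₜ (e j)) (h ⊗ₜ (e j))) →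
    -- `(1_i#h)·m = m·(h#1_j)`
    (∀ (i j : Fin n) (h : H) (m : M i j), Lmod i j (u i h) m = Rmod i j (v j h) m) →
    -- `(1_i#h)·r = h ⇀_i r`
    (∀ (i : Fin n) (h : H) (r : M i i), Lmod i i (u i h) r = acti i h r) →
    -- `(r#1)·m = r m`
    (∀ (i j : Fin n) (r : M i i) (m : M i j),
      Lmod i j (lsmashMul₂ (θ i i i) (acti i) (r ⊗ₜ (1 : H)) ((e i) ⊗ₜ (1 : H))) m =
        θ i i j r m) →
    -- `m·(1#r) = m r`
    (∀ (i j : Fin n) (m : M i j) (r : M j j),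
      Rmod i j (rsmashMulGen₂ (LinearMap.mul k H).flip (θ j j j) ((acti j).flip)
          ((1 : H) ⊗ₜ (e j)) ((1 : H) ⊗ₜ r)) m = θ i j j m r) →
    -- `(1_i#h)·(mn) = ((1_i#h₍₁₎)·m)((1_j#h₍₂₎)·n)`
    (∀ (i j l : Fin n) (h : H) (m : M i j) (nn : M j l),
      Lmod i l (u i h) (θ i j l m nn) =
        TensorProduct.lift
          (((θ i j l ∘ₗ ((Lmod i j ∘ₗ u i).flip m)).compl₂
              ((Lmod j l ∘ₗ u j).flip nn)))
          (Coalgebra.comul (R := k) h)) →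
    -- then the entrywise map `h ▷ (m_ij) = (1_i#h)·m_ij` is a symmetric left partial
    -- action on `R` leaving each `ι_ij(M i j)` invariant
    ∀ actR : H →ₗ[k] gmaSpace M →ₗ[k] gmaSpace M,
      (∀ (h : H) (x : gmaSpace M) (p : Fin n × Fin n),
        actR h x p = Lmod p.1 p.2 (u p.1 h) (x p)) →
      IsLeftPartialActionOn k (gmaMulL M θ) (gmaOne M e) actR ∧
      (∀ (i j : Fin n) (h : H) (m : M i j),
        actR h (gmaIncl (k := k) M i j m) ∈ LinearMap.range (gmaIncl (k := k) M i j)) := by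
  intro u hu v hv hLR hact hre hre' hcm actR hactR
  let L i j : H →ₗ[k] Module.End k (M i j) := Lmod i j ∘ₗ u i
  refine ⟨isLeftPartialActionOn_gma_of_entrywise (L := L) hactR
    (fun i j => by simp only [L, LinearMap.comp_apply, hu, hLone]) hcm ?_ ?_,
    fun i j h m => ⟨_, (apply_gmaIncl_of_entrywise (L := L) hactR i j h m).symm⟩⟩
  · intro i j h g m
    rw [lift_compl₂_comul_eq_sum _ _ _ (ℛ k h)]
    simp only [L, LinearMap.comp_apply, LinearMap.flip_apply, LinearMap.mulRight_apply, hact]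
    simp only [hu]
    exact lsmash_rep_unit_apply_unit_apply (hacti i) (hd.one_mul i i) (hd.mul_one i i)
      (θ i i j) (Lmod i j) (hLmul i j) (hre i j) h g m _
  · intro i j h g m
    rw [lift_compl₂_comul_eq_sum _ _ _ (ℛ k h)]
    simp only [L, LinearMap.comp_apply, LinearMap.flip_apply, LinearMap.mulRight_apply, hact]
    simp only [hLR, hv]
    exact rsmash_rep_unit_apply_unit_apply (hacti j) (hd.one_mul j j) (hd.mul_one j j)
      (θ i j j) (Rmod i j) (hRmul i j) (fun a m => hre' i j m a) h g m _

/-- **converse direction of Theorem 3.4.**  Suppose that for each `i`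
there is a symmetric left partial action `⇀_i` of `H` on `R_i = M i i`, and that each
`M i j` is a left `R_i # H`-module and a right `H^op # R_j`-module (encoded by the
multiplicative unital maps `Lmod i j` and the anti-multiplicative unital maps
`Rmod i j` on the respective partial smash products) such that
`(1_i#h)·m = m·(h#1_j)`, `(1_i#h)·r = h ⇀_i r`, `(r#1)·m = r m`, `m·(1#r) = m r`, and
`(1_i#h)·(mn) = ((1_i#h₍₁₎)·m)((1_j#h₍₂₎)·n)`.  Then `h ▷ (m_ij) := ((1_i#h)·m_ij)`
defines a symmetric left partial action of `H` on the generalized matrix algebra `R`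
leaving each `ι_ij(M i j)` invariant. -/
theorem gma_partial_action_of_local_data
    {k : Type*} [Field k] {n : ℕ}
    (M : Fin n → Fin n → Type*) [∀ i j, AddCommGroup (M i j)] [∀ i j, Module k (M i j)]
    (θ : ∀ i j l : Fin n, M i j →ₗ[k] M j l →ₗ[k] M i l)
    (e : ∀ i, M i i) (hd : IsGMDatum M θ e)
    {H : Type*} [Ring H] [HopfAlgebra k H]
    (acti : ∀ i, H →ₗ[k] M i i →ₗ[k] M i i)
    (hacti : ∀ i, IsLeftPartialActionOn k (θ i i i) (e i) (acti i))
    (Lmod : ∀ i j, (M i i ⊗[k] H) →ₗ[k] Module.End k (M i j))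
    (Rmod : ∀ i j, (H ⊗[k] M j j) →ₗ[k] Module.End k (M i j))
    -- `M i j` is a left module over the left partial smash product `R_i # H`
    (hLmul : ∀ i j : Fin n,
      ∀ x ∈ Submodule.span k {z : M i i ⊗[k] H | ∃ (a : M i i) (h : H),
          z = lsmashMul₂ (θ i i i) (acti i) (a ⊗ₜ h) ((e i) ⊗ₜ (1 : H))},
      ∀ y ∈ Submodule.span k {z : M i i ⊗[k] H | ∃ (a : M i i) (h : H),
          z = lsmashMul₂ (θ i i i) (acti i) (a ⊗ₜ h) ((e i) ⊗ₜ (1 : H))},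
        Lmod i j (lsmashMul₂ (θ i i i) (acti i) x y) = Lmod i j x * Lmod i j y)
    (hLone : ∀ i j : Fin n,
      Lmod i j (lsmashMul₂ (θ i i i) (acti i)
        ((e i) ⊗ₜ (1 : H)) ((e i) ⊗ₜ (1 : H))) = 1)
    -- `M i j` is a right module over the right partial smash product `H^op # R_j`
    (hRmul : ∀ i j : Fin n,
      ∀ x ∈ Submodule.span k {z : H ⊗[k] M j j | ∃ (h : H) (a : M j j),
          z = rsmashMulGen₂ (LinearMap.mul k H).flip (θ j j j) ((acti j).flip)
                ((1 : H) ⊗ₜ (e j)) (h ⊗ₜ a)},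
      ∀ y ∈ Submodule.span k {z : H ⊗[k] M j j | ∃ (h : H) (a : M j j),
          z = rsmashMulGen₂ (LinearMap.mul k H).flip (θ j j j) ((acti j).flip)
                ((1 : H) ⊗ₜ (e j)) (h ⊗ₜ a)},
        Rmod i j (rsmashMulGen₂ (LinearMap.mul k H).flip (θ j j j) ((acti j).flip) x y) =
          Rmod i j y * Rmod i j x)
    (hRone : ∀ i j : Fin n,
      Rmod i j (rsmashMulGen₂ (LinearMap.mul k H).flip (θ j j j) ((acti j).flip)
        ((1 : H) ⊗ₜ (e j)) ((1 : H) ⊗ₜ (e j))) = 1) :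
    -- `u i h = 1_i # h` in `R_i # H`,  `v j h = h # 1_j` in `H^op # R_j`
    ∀ u : ∀ i : Fin n, H →ₗ[k] (M i i ⊗[k] H),
      (∀ (i : Fin n) (h : H), u i h =
        lsmashMul₂ (θ i i i) (acti i) ((e i) ⊗ₜ h) ((e i) ⊗ₜ (1 : H))) →
    ∀ v : ∀ j : Fin n, H →ₗ[k] (H ⊗[k] M j j),
      (∀ (j : Fin n) (h : H), v j h =
        rsmashMulGen₂ (LinearMap.mul k H).flip (θ j j j) ((acti j).flip)
          ((1 : H) ⊗ₜ (e j)) (h ⊗ₜ (e j))) →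
    -- `(1_i#h)·m = m·(h#1_j)`
    (∀ (i j : Fin n) (h : H) (m : M i j), Lmod i j (u i h) m = Rmod i j (v j h) m) →
    -- `(1_i#h)·r = h ⇀_i r`
    (∀ (i : Fin n) (h : H) (r : M i i), Lmod i i (u i h) r = acti i h r) →
    -- `(r#1)·m = r m`
    (∀ (i j : Fin n) (r : M i i) (m : M i j),
      Lmod i j (lsmashMul₂ (θ i i i) (acti i) (r ⊗ₜ (1 : H)) ((e i) ⊗ₜ (1 : H))) m =
        θ i i j r m) →
    -- `m·(1#r) = m r`
    (∀ (i j : Fin n) (m : M i j) (r : M j j),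
      Rmod i j (rsmashMulGen₂ (LinearMap.mul k H).flip (θ j j j) ((acti j).flip)
          ((1 : H) ⊗ₜ (e j)) ((1 : H) ⊗ₜ r)) m = θ i j j m r) →
    -- `(1_i#h)·(mn) = ((1_i#h₍₁₎)·m)((1_j#h₍₂₎)·n)`
    (∀ (i j l : Fin n) (h : H) (m : M i j) (nn : M j l),
      Lmod i l (u i h) (θ i j l m nn) =
        TensorProduct.lift
          (((θ i j l ∘ₗ ((Lmod i j ∘ₗ u i).flip m)).compl₂
              ((Lmod j l ∘ₗ u j).flip nn)))
          (Coalgebra.comul (R := k) h)) →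
    -- then the entrywise map `h ▷ (m_ij) = (1_i#h)·m_ij` is a symmetric left partial
    -- action on `R` leaving each `ι_ij(M i j)` invariant
    ∀ actR : H →ₗ[k] gmaSpace M →ₗ[k] gmaSpace M,
      (∀ (h : H) (x : gmaSpace M) (p : Fin n × Fin n),
        actR h x p = Lmod p.1 p.2 (u p.1 h) (x p)) →
      IsLeftPartialActionOn k (gmaMulL M θ) (gmaOne M e) actR ∧
      (∀ (i j : Fin n) (h : H) (m : M i j),
        actR h (gmaIncl (k := k) M i j m) ∈ LinearMap.range (gmaIncl (k := k) M i j)) :=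
  gma_partial_action_of_local_data_general M θ e hd acti hacti Lmod Rmod hLmul hLone hRmul
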